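/- A Euclidean quasicomposition algebra has defect 0 if and only if it is a composition algebra: tr(L(x)L(x^σ)) = dim A · h(x,x) for all x holds if and only if L(x^σ)L(x) = h(x,x)·Id for all x. -/

import Mathlib

/-!
Fix `x`, write `L` for left multiplication and put `S = L(x^σ) L(x) - h(x,x) • 1`. The
invariance of `h` makes `L(x^σ)` the `h`-adjoint of `L(x)`, so `S` is `h`-self-adjoint, and the
quasicomposition identity `L(x) L(x^σ) L(x) = h(x,x) • L(x)` gives `S² = -h(x,x) • S`. Since
`tr (L(x) L(x^σ)) = tr S + dim A · h(x,x)`, defect zero at `x` means `tr S = 0`, hence `tr S² = 0`.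
In an `h`-orthogonal basis `tr S² = ∑ h(S bᵢ, S bᵢ) / h(bᵢ, bᵢ)`, a sum of nonnegative terms, so
positivity of `h` forces `S = 0`, which is the composition identity at `x`.
-/

open Module LinearMap

theorem sub_smul_one_mul_self_of_mul_mul_eq_smul {R : Type*} [Ring R] [Algebra ℝ R] {f g : R}
    {q : ℝ} (hfgf : f * g * f = q • f) :
    (g * f - q • 1) * (g * f - q • 1) = -q • (g * f - q • 1) := by
  have : g * f * (g * f) = q • (g * f) := by
    rw [mul_assoc, ← mul_assoc f, hfgf, mul_smul_comm]
  simp only [sub_mul, mul_sub, this, smul_mul_assoc, mul_smul_comm, one_mul, mul_one]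
  module

namespace LinearMap.BilinForm

variable {V : Type*} [AddCommGroup V] [Module ℝ V]

theorem basis_repr_mul_eq_of_isOrthoᵢ {ι : Type*} [Fintype ι] {B : LinearMap.BilinForm ℝ V}
    {b : Basis ι ℝ V} (hb : B.IsOrthoᵢ b) (w : V) (i : ι) :
    b.repr w i * B (b i) (b i) = B (b i) w := by
  conv_rhs => rw [← b.sum_repr w]
  rw [map_sum, Finset.sum_eq_single i (fun j _ hj => by rw [map_smul, hb hj.symm, smul_zero])
    (by simp), map_smul, smul_eq_mul]

theorem trace_eq_sum_of_isOrthoᵢ {ι : Type*} [Fintype ι] {B : LinearMap.BilinForm ℝ V}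
    {b : Basis ι ℝ V} (hb : B.IsOrthoᵢ b) (hbb : ∀ i, B (b i) (b i) ≠ 0) (f : End ℝ V) :
    trace ℝ V f = ∑ i, B (b i) (f (b i)) / B (b i) (b i) := by
  classical
  rw [trace_eq_matrix_trace ℝ b, Matrix.trace]
  refine Finset.sum_congr rfl fun i _ => ?_
  rw [Matrix.diag_apply, LinearMap.toMatrix_apply, eq_div_iff (hbb i),
    basis_repr_mul_eq_of_isOrthoᵢ hb]

theorem eq_zero_of_isSelfAdjoint_of_trace_mul_self_eq_zero [FiniteDimensional ℝ V]
    {B : LinearMap.BilinForm ℝ V} (hB : LinearMap.IsSymm B) (hpos : ∀ x, x ≠ 0 → 0 < B x x)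
    {S : End ℝ V} (hS : B.IsSelfAdjoint S) (htr : trace ℝ V (S * S) = 0) : S = 0 := by
  obtain ⟨b, hb⟩ := LinearMap.BilinForm.exists_orthogonal_basis hB
  have hbpos i : 0 < B (b i) (b i) := hpos _ (b.ne_zero i)
  have hnonneg v : 0 ≤ B v v := by
    rcases eq_or_ne v 0 with rfl | hv
    · simp
    · exact (hpos v hv).le
  rw [trace_eq_sum_of_isOrthoᵢ hb fun i => (hbpos i).ne'] at htr
  simp only [Module.End.mul_apply, ← hS _ (S _)] at htr
  rw [Finset.sum_eq_zero_iff_of_nonneg fun i _ => div_nonneg (hnonneg _) (hbpos i).le] at htr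
  refine b.ext fun i => ?_
  by_contra hne
  exact (div_pos (hpos _ hne) (hbpos i)).ne' (htr i (Finset.mem_univ i))

theorem trace_eq_zero_iff_of_mul_self_eq_smul [FiniteDimensional ℝ V]
    {B : LinearMap.BilinForm ℝ V} (hB : LinearMap.IsSymm B) (hpos : ∀ x, x ≠ 0 → 0 < B x x)
    {S : End ℝ V} (hS : B.IsSelfAdjoint S) {c : ℝ} (hSS : S * S = c • S) :
    trace ℝ V S = 0 ↔ S = 0 := by
  refine ⟨fun htr => eq_zero_of_isSelfAdjoint_of_trace_mul_self_eq_zero hB hpos hS ?_,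
    fun hS0 => by rw [hS0, map_zero]⟩
  rw [hSS, map_smul, htr, smul_zero]

end LinearMap.BilinForm

theorem isAdjointPair_mul_left {A : Type*} [AddCommGroup A] [Module ℝ A]
    {mul : A →ₗ[ℝ] A →ₗ[ℝ] A} {σ : A →ₗ[ℝ] A} {h : A →ₗ[ℝ] A →ₗ[ℝ] ℝ}
    (hσinv : ∀ x : A, σ (σ x) = x)
    (hσmul : ∀ x y : A, σ (mul x y) = mul (σ y) (σ x))
    (hσorth : ∀ x y : A, h (σ x) (σ y) = h x y)
    (hinv : ∀ x y z : A, h (mul x y) z = h x (mul z (σ y))) (x : A) :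
    IsAdjointPair h h (mul x) (mul (σ x)) := fun y z =>
  calc h (mul x y) z = h (mul (σ y) (σ x)) (σ z) := by rw [← hσorth, hσmul]
    _ = h (σ y) (σ (mul (σ x) z)) := by rw [hinv, hσmul, hσinv]
    _ = h y (mul (σ x) z) := hσorth _ _

theorem quasicomposition_defect_zero_iff_composition
    {A : Type*} [AddCommGroup A] [Module ℝ A] [FiniteDimensional ℝ A]
    (mul : A →ₗ[ℝ] A →ₗ[ℝ] A)
    (σ : A →ₗ[ℝ] A)
    (hσinv : ∀ x : A, σ (σ x) = x)
    (hσmul : ∀ x y : A, σ (mul x y) = mul (σ y) (σ x))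
    (h : A →ₗ[ℝ] A →ₗ[ℝ] ℝ)
    (hsymm : ∀ x y : A, h x y = h y x)
    (hpos : ∀ x : A, x ≠ 0 → 0 < h x x)
    (hσorth : ∀ x y : A, h (σ x) (σ y) = h x y)
    (hinv : ∀ x y z : A, h (mul x y) z = h x (mul z (σ y)))
    (hqc : ∀ x y : A, mul x (mul (σ x) (mul x y)) = h x x • mul x y) :
    (∀ x : A, LinearMap.trace ℝ A (mul x ∘ₗ mul (σ x))
        = (Module.finrank ℝ A : ℝ) * h x x) ↔
    (∀ x y : A, mul (σ x) (mul x y) = h x x • y) := by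
  have hadj := isAdjointPair_mul_left hσinv hσmul hσorth hinv
  refine forall_congr' fun x => ?_
  set S : End ℝ A := mul (σ x) * mul x - h x x • 1 with hS_def
  have hS : h.IsSelfAdjoint S := by
    have := (hadj (σ x)).mul (hadj x)
    rw [hσinv] at this
    exact this.sub (isAdjointPair_one.smul _)
  have hSS : S * S = -h x x • S :=
    sub_smul_one_mul_self_of_mul_mul_eq_smul (LinearMap.ext fun y => hqc x y)
  have htrace : trace ℝ A (mul x ∘ₗ mul (σ x)) = trace ℝ A S + finrank ℝ A * h x x := by
    rw [hS_def, map_sub, map_smul, ← Module.End.mul_eq_comp, trace_mul_comm, trace_one,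
      smul_eq_mul]
    ring
  rw [htrace, add_eq_right, LinearMap.BilinForm.trace_eq_zero_iff_of_mul_self_eq_smul
    ⟨hsymm⟩ hpos hS hSS, sub_eq_zero, LinearMap.ext_iff]
  rfl
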